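/- Suppose X is a compact metric space and {F_α}_{α∈Λ} is a collection of closed subsets of X × X such that for each x ∈ X and each α, the set {y ∈ X : (x,y) ∈ F_α} is nonempty and connected, and such that F = ∪_α F_α is a closed connected subset of X × X with {x ∈ X : (x,y) ∈ F} nonempty for each y ∈ X. Then the inverse limit lim← F = {(x₀, x₁, x₂, …) ∈ X^ℕ : (x_{i+1}, x_i) ∈ F for all i} is connected. -/
import Mathlib


open Set

/-- If a compact set maps onto a preconnected image with preconnected fibers,
then it is preconnected. -/
lemma fiber_lemma {Y Z : Type*} [TopologicalSpace Y] [TopologicalSpace Z] [T2Space Z]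
    (S : Set Y) (hS : IsCompact S) (f : Y → Z) (hf : Continuous f)
    (hT : IsPreconnected (f '' S)) (hfib : ∀ z : Z, IsPreconnected (S ∩ f ⁻¹' {z})) :
    IsPreconnected S := by
  rintro u v hu hv hsub ⟨a, haS, hau⟩ ⟨b, hbS, hbv⟩
  by_contra hcon
  rw [not_nonempty_iff_eq_empty] at hcon
  have hAe : S ∩ u = S ∩ vᶜ := by
    apply Set.Subset.antisymm
    · rintro x ⟨hx, hxu⟩
      refine ⟨hx, fun hxv => ?_⟩
      have : x ∈ S ∩ (u ∩ v) := ⟨hx, hxu, hxv⟩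
      rw [hcon] at this; exact this
    · rintro x ⟨hx, hxv⟩
      rcases hsub hx with h | h
      · exact ⟨hx, h⟩
      · exact absurd h hxv
  have hBe : S ∩ v = S ∩ uᶜ := by
    apply Set.Subset.antisymm
    · rintro x ⟨hx, hxv⟩
      refine ⟨hx, fun hxu => ?_⟩
      have : x ∈ S ∩ (u ∩ v) := ⟨hx, hxu, hxv⟩
      rw [hcon] at this; exact this
    · rintro x ⟨hx, hxu⟩
      rcases hsub hx with h | h
      · exact absurd h hxu
      · exact ⟨hx, h⟩
  have hAc : IsCompact (S ∩ u) := by rw [hAe]; exact hS.inter_right hv.isClosed_compl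
  have hBc : IsCompact (S ∩ v) := by rw [hBe]; exact hS.inter_right hu.isClosed_compl
  have hdisj : Disjoint (f '' (S ∩ u)) (f '' (S ∩ v)) := by
    rw [Set.disjoint_left]
    rintro z ⟨p, ⟨hpS, hpu⟩, hpz⟩ ⟨q, ⟨hqS, hqv⟩, hqz⟩
    have hfibz := hfib z
    have h1 : ((S ∩ f ⁻¹' {z}) ∩ u).Nonempty := ⟨p, ⟨hpS, hpz⟩, hpu⟩
    have h2 : ((S ∩ f ⁻¹' {z}) ∩ v).Nonempty := ⟨q, ⟨hqS, hqz⟩, hqv⟩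
    have h3 : S ∩ f ⁻¹' {z} ⊆ u ∪ v := fun x hx => hsub hx.1
    obtain ⟨r, ⟨hrS, _⟩, hru, hrv⟩ := hfibz u v hu hv h3 h1 h2
    have : r ∈ S ∩ (u ∩ v) := ⟨hrS, hru, hrv⟩
    rw [hcon] at this; exact this
  have hcover : f '' S ⊆ f '' (S ∩ u) ∪ f '' (S ∩ v) := by
    rintro z ⟨p, hpS, hpz⟩
    rcases hsub hpS with h | h
    · exact Or.inl ⟨p, ⟨hpS, h⟩, hpz⟩
    · exact Or.inr ⟨p, ⟨hpS, h⟩, hpz⟩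
  obtain ⟨z, hz, hz1, hz2⟩ := isPreconnected_closed_iff.mp hT (f '' (S ∩ u)) (f '' (S ∩ v))
    (hAc.image hf).isClosed (hBc.image hf).isClosed hcover
    ⟨f a, ⟨a, haS, rfl⟩, ⟨a, ⟨haS, hau⟩, rfl⟩⟩ ⟨f b, ⟨b, hbS, rfl⟩, ⟨b, ⟨hbS, hbv⟩, rfl⟩⟩
  exact Set.disjoint_left.mp hdisj hz1 hz2

/-- A union of preconnected pieces is preconnected, provided the images of the
pieces under a continuous map have a preconnected union, and pieces with
intersecting images intersect. -/
lemma union_lemma {Y Z : Type*} [TopologicalSpace Y] [TopologicalSpace Z] [T2Space Z]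
    {ι : Type*} (E : ι → Set Y) (hE : IsCompact (⋃ α, E α))
    (hEc : ∀ α, IsPreconnected (E α)) (φ : Y → Z) (hφ : Continuous φ)
    (hF : IsPreconnected (φ '' ⋃ α, E α))
    (hlink : ∀ α β, ((φ '' E α) ∩ (φ '' E β)).Nonempty → (E α ∩ E β).Nonempty) :
    IsPreconnected (⋃ α, E α) := by
  set S := ⋃ α, E α with hSdef
  rintro u v hu hv hsub ⟨a, haS, hau⟩ ⟨b, hbS, hbv⟩
  by_contra hcon
  rw [not_nonempty_iff_eq_empty] at hcon
  -- each piece lies in u or in v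
  have hside : ∀ α, E α ⊆ u ∨ E α ⊆ v := by
    intro α
    by_contra h
    push_neg at h
    obtain ⟨h1, h2⟩ := h
    obtain ⟨p, hp, hpu⟩ := Set.not_subset.mp h1
    obtain ⟨q, hq, hqv⟩ := Set.not_subset.mp h2
    have hpS : p ∈ S := Set.mem_iUnion.mpr ⟨α, hp⟩
    have hqS : q ∈ S := Set.mem_iUnion.mpr ⟨α, hq⟩
    have hpv : p ∈ v := (hsub hpS).resolve_left hpu
    have hqu : q ∈ u := (hsub hqS).resolve_right hqv
    obtain ⟨r, hr, hru, hrv⟩ := hEc α u v hu hv (fun x hx => hsub (Set.mem_iUnion.mpr ⟨α, hx⟩))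
      ⟨q, hq, hqu⟩ ⟨p, hp, hpv⟩
    have : r ∈ S ∩ (u ∩ v) := ⟨Set.mem_iUnion.mpr ⟨α, hr⟩, hru, hrv⟩
    rw [hcon] at this; exact this
  have hAe : S ∩ u = S ∩ vᶜ := by
    apply Set.Subset.antisymm
    · rintro x ⟨hx, hxu⟩
      refine ⟨hx, fun hxv => ?_⟩
      have : x ∈ S ∩ (u ∩ v) := ⟨hx, hxu, hxv⟩
      rw [hcon] at this; exact this
    · rintro x ⟨hx, hxv⟩
      rcases hsub hx with h | h
      · exact ⟨hx, h⟩
      · exact absurd h hxv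
  have hBe : S ∩ v = S ∩ uᶜ := by
    apply Set.Subset.antisymm
    · rintro x ⟨hx, hxv⟩
      refine ⟨hx, fun hxu => ?_⟩
      have : x ∈ S ∩ (u ∩ v) := ⟨hx, hxu, hxv⟩
      rw [hcon] at this; exact this
    · rintro x ⟨hx, hxu⟩
      rcases hsub hx with h | h
      · exact absurd h hxu
      · exact ⟨hx, h⟩
  have hAc : IsCompact (S ∩ u) := by rw [hAe]; exact hE.inter_right hv.isClosed_compl
  have hBc : IsCompact (S ∩ v) := by rw [hBe]; exact hE.inter_right hu.isClosed_compl
  have hdisj : Disjoint (φ '' (S ∩ u)) (φ '' (S ∩ v)) := by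
    rw [Set.disjoint_left]
    rintro z ⟨p, ⟨hpS, hpu⟩, hpz⟩ ⟨q, ⟨hqS, hqv⟩, hqz⟩
    obtain ⟨α, hpα⟩ := Set.mem_iUnion.mp hpS
    obtain ⟨β, hqβ⟩ := Set.mem_iUnion.mp hqS
    have hαu : E α ⊆ u := by
      rcases hside α with h | h
      · exact h
      · exfalso
        have : p ∈ S ∩ (u ∩ v) := ⟨hpS, hpu, h hpα⟩
        rw [hcon] at this; exact this
    have hβv : E β ⊆ v := by
      rcases hside β with h | h
      · exfalso
        have : q ∈ S ∩ (u ∩ v) := ⟨hqS, h hqβ, hqv⟩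
        rw [hcon] at this; exact this
      · exact h
    obtain ⟨r, hrα, hrβ⟩ := hlink α β ⟨z, ⟨p, hpα, hpz⟩, ⟨q, hqβ, hqz⟩⟩
    have : r ∈ S ∩ (u ∩ v) := ⟨Set.mem_iUnion.mpr ⟨α, hrα⟩, hαu hrα, hβv hrβ⟩
    rw [hcon] at this; exact this
  have hcover : φ '' S ⊆ φ '' (S ∩ u) ∪ φ '' (S ∩ v) := by
    rintro z ⟨p, hpS, hpz⟩
    rcases hsub hpS with h | h
    · exact Or.inl ⟨p, ⟨hpS, h⟩, hpz⟩
    · exact Or.inr ⟨p, ⟨hpS, h⟩, hpz⟩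
  obtain ⟨z, hz, hz1, hz2⟩ := isPreconnected_closed_iff.mp hF (φ '' (S ∩ u)) (φ '' (S ∩ v))
    (hAc.image hφ).isClosed (hBc.image hφ).isClosed hcover
    ⟨φ a, ⟨a, haS, rfl⟩, ⟨a, ⟨haS, hau⟩, rfl⟩⟩ ⟨φ b, ⟨b, hbS, rfl⟩, ⟨b, ⟨hbS, hbv⟩, rfl⟩⟩
  exact Set.disjoint_left.mp hdisj hz1 hz2

theorem stmt16 {X : Type*} [MetricSpace X] [CompactSpace X]
    {Λ : Type*} (F : Λ → Set (X × X))
    (hclosed : ∀ α, IsClosed (F α))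
    (hsec : ∀ α, ∀ x : X, {y : X | (x, y) ∈ F α}.Nonempty ∧
      IsConnected {y : X | (x, y) ∈ F α})
    (hFclosed : IsClosed (⋃ α, F α))
    (hFconn : IsConnected (⋃ α, F α))
    (hsurj : ∀ y : X, {x : X | (x, y) ∈ ⋃ α, F α}.Nonempty) :
    IsConnected {x : ℕ → X | ∀ i, (x (i + 1), x i) ∈ ⋃ α, F α} := by
  classical
  set F' : Set (X × X) := ⋃ α, F α with hF'def
  -- an index exists
  obtain ⟨⟨x₀, y₀⟩, hxy₀⟩ := hFconn.nonempty
  obtain ⟨α₀, hα₀⟩ := Set.mem_iUnion.mp hxy₀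
  -- upward extension function
  let g : X → X := fun y => (hsurj y).choose
  have hg : ∀ y, (g y, y) ∈ F' := fun y => (hsurj y).choose_spec
  let ext : X → (ℕ → X) := fun x n => g^[n] x
  have hext0 : ∀ x, ext x 0 = x := fun x => rfl
  have hextF : ∀ x i, (ext x (i + 1), ext x i) ∈ F' := by
    intro x i
    have h : ext x (i + 1) = g (ext x i) := Function.iterate_succ_apply' g i x
    rw [h]; exact hg _
  -- X is a preconnected space
  have hfstsurj : Prod.fst '' F' = univ := by
    apply Set.eq_univ_of_forall
    intro x
    obtain ⟨y, hy⟩ := (hsec α₀ x).1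
    exact ⟨(x, y), Set.mem_iUnion.mpr ⟨α₀, hy⟩, rfl⟩
  haveI : PreconnectedSpace X := by
    constructor
    rw [← hfstsurj]
    exact hFconn.isPreconnected.image _ continuous_fst.continuousOn
  haveI : PreconnectedSpace (ℕ → X) := inferInstance
  -- the finite-stage sets
  set K : ℕ → Set (ℕ → X) := fun n => {x | ∀ i < n, (x (i + 1), x i) ∈ F'} with hKdef
  have hKclosed : ∀ n, IsClosed (K n) := by
    intro n
    have he : K n = ⋂ i, ⋂ (_ : i < n), (fun x : ℕ → X => (x (i + 1), x i)) ⁻¹' F' := by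
      ext x; simp [hKdef]
    rw [he]
    exact isClosed_iInter fun i => isClosed_iInter fun _ =>
      hFclosed.preimage ((continuous_apply (i + 1)).prodMk (continuous_apply i))
  have hKcompact : ∀ n, IsCompact (K n) := fun n => (hKclosed n).isCompact
  have hextK : ∀ x n, ext x ∈ K n := fun x n i _ => hextF x i
  -- shift and cons
  let shift : (ℕ → X) → (ℕ → X) := fun x i => x (i + 1)
  have hshift : Continuous shift := continuous_pi fun i => continuous_apply (i + 1)
  let cons : X → (ℕ → X) → (ℕ → X) := fun t y i => Nat.casesOn i t fun j => y j
  have hconsshift : ∀ t y, shift (cons t y) = y := by intro t y; funext j; rfl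
  have hconseq : ∀ (x : ℕ → X), cons (x 0) (shift x) = x := by
    intro x; funext i; cases i <;> rfl
  have hconscont : ∀ y : ℕ → X, Continuous fun t => cons t y := by
    intro y
    apply continuous_pi
    intro i
    cases i with
    | zero => exact continuous_id
    | succ j => exact continuous_const
  -- membership in K (n+1)
  have hKmem : ∀ n (x : ℕ → X), x ∈ K (n + 1) ↔ (x 1, x 0) ∈ F' ∧ shift x ∈ K n := by
    intro n x
    constructor
    · intro h
      refine ⟨h 0 n.succ_pos, fun i hi => ?_⟩
      exact h (i + 1) (by omega)
    · rintro ⟨h1, h2⟩ i hi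
      cases i with
      | zero => exact h1
      | succ j => exact h2 j (by omega)
  -- each stage is preconnected
  have hKconn : ∀ n, IsPreconnected (K n) := by
    intro n
    induction n with
    | zero =>
      have he : K 0 = univ := by
        apply Set.eq_univ_of_forall; intro x i hi; omega
      rw [he]; exact isPreconnected_univ
    | succ n ih =>
      set E : Λ → Set (ℕ → X) := fun α => {x | (x 1, x 0) ∈ F α ∧ shift x ∈ K n} with hEdef
      have hEK : ⋃ α, E α = K (n + 1) := by
        ext x
        rw [hKmem n x]
        constructor
        · intro hx
          obtain ⟨α, h1, h2⟩ := Set.mem_iUnion.mp hx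
          exact ⟨Set.mem_iUnion.mpr ⟨α, h1⟩, h2⟩
        · rintro ⟨h1, h2⟩
          obtain ⟨α, hα⟩ := Set.mem_iUnion.mp h1
          exact Set.mem_iUnion.mpr ⟨α, hα, h2⟩
      have hEclosed : ∀ α, IsClosed (E α) := by
        intro α
        have he : E α = (fun x : ℕ → X => (x 1, x 0)) ⁻¹' (F α) ∩ shift ⁻¹' (K n) := rfl
        rw [he]
        exact (((hclosed α).preimage
          ((continuous_apply 1).prodMk (continuous_apply 0)))).inter
          ((hKclosed n).preimage hshift)
      have hEcompact : ∀ α, IsCompact (E α) := fun α => (hEclosed α).isCompact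
      -- shift images
      have hEimg : ∀ α, shift '' E α = K n := by
        intro α
        apply Set.Subset.antisymm
        · rintro y ⟨x, hx, rfl⟩; exact hx.2
        · intro y hy
          obtain ⟨t, ht⟩ := (hsec α (y 0)).1
          refine ⟨cons t y, ⟨?_, ?_⟩, hconsshift t y⟩
          · exact ht
          · rw [hconsshift t y]; exact hy
      -- pieces are preconnected
      have hEconn : ∀ α, IsPreconnected (E α) := by
        intro α
        apply fiber_lemma (E α) (hEcompact α) shift hshift
        · rw [hEimg α]; exact ih
        · intro y
          by_cases hy : y ∈ K n
          · have he : E α ∩ shift ⁻¹' {y} =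
                (fun t => cons t y) '' {t : X | (y 0, t) ∈ F α} := by
              apply Set.Subset.antisymm
              · rintro x ⟨⟨h1, _⟩, h2⟩
                simp only [Set.mem_preimage, Set.mem_singleton_iff] at h2
                refine ⟨x 0, ?_, ?_⟩
                · show (y 0, x 0) ∈ F α
                  have : x 1 = y 0 := congrFun h2 0
                  rwa [this] at h1
                · rw [← h2]; exact hconseq x
              · rintro x ⟨t, ht, rfl⟩
                refine ⟨⟨?_, ?_⟩, ?_⟩
                · show ((cons t y) 1, (cons t y) 0) ∈ F α
                  exact ht
                · rw [hconsshift t y]; exact hy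
                · exact hconsshift t y
            rw [he]
            exact ((hsec α (y 0)).2.isPreconnected).image _ (hconscont y).continuousOn
          · have he : E α ∩ shift ⁻¹' {y} = ∅ := by
              apply Set.eq_empty_iff_forall_notMem.mpr
              rintro x ⟨⟨_, h2⟩, h3⟩
              simp only [Set.mem_preimage, Set.mem_singleton_iff] at h3
              rw [h3] at h2
              exact hy h2
            rw [he]; exact isPreconnected_empty
      -- image of the union under the two-coordinate map
      set φ : (ℕ → X) → X × X := fun x => (x 1, x 0) with hφdef
      have hφcont : Continuous φ := (continuous_apply 1).prodMk (continuous_apply 0)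
      have hφimg : φ '' (⋃ α, E α) = F' := by
        rw [hEK]
        apply Set.Subset.antisymm
        · rintro z ⟨x, hx, rfl⟩
          exact hx 0 n.succ_pos
        · rintro ⟨z1, z2⟩ hz
          refine ⟨cons z2 (ext z1), ?_, ?_⟩
          · rw [hKmem]
            constructor
            · show ((cons z2 (ext z1)) 1, (cons z2 (ext z1)) 0) ∈ F'
              exact hz
            · rw [hconsshift z2 (ext z1)]; exact hextK z1 n
          · rfl
      have hφEα : ∀ α, φ '' E α ⊆ F α := by
        rintro α z ⟨x, hx, rfl⟩
        exact hx.1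
      rw [← hEK]
      apply union_lemma E (by rw [hEK]; exact hKcompact (n + 1)) hEconn φ hφcont
      · rw [hφimg]; exact hFconn.isPreconnected
      · intro α β ⟨z, hzα, hzβ⟩
        have hzFα : z ∈ F α := hφEα α hzα
        have hzFβ : z ∈ F β := hφEα β hzβ
        refine ⟨cons z.2 (ext z.1), ⟨?_, ?_⟩, ⟨?_, ?_⟩⟩
        · show ((cons z.2 (ext z.1)) 1, (cons z.2 (ext z.1)) 0) ∈ F α
          show ((ext z.1) 0, z.2) ∈ F α
          rw [hext0]
          exact hzFα
        · rw [hconsshift z.2 (ext z.1)]; exact hextK z.1 n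
        · show ((ext z.1) 0, z.2) ∈ F β
          rw [hext0]
          exact hzFβ
        · rw [hconsshift z.2 (ext z.1)]; exact hextK z.1 n
  -- the inverse limit
  set T : Set (ℕ → X) := {x : ℕ → X | ∀ i, (x (i + 1), x i) ∈ F'} with hTdef
  have hTK : T = ⋂ n, K n := by
    ext x
    simp only [hTdef, Set.mem_setOf_eq, Set.mem_iInter, hKdef]
    constructor
    · intro h n i _; exact h i
    · intro h i; exact h (i + 1) i (by omega)
  have hTclosed : IsClosed T := by
    rw [hTK]; exact isClosed_iInter hKclosed
  have hTne : T.Nonempty := ⟨ext x₀, fun i => hextF x₀ i⟩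
  have hTsub : ∀ n, T ⊆ K n := by
    intro n; rw [hTK]; exact Set.iInter_subset K n
  constructor
  · exact hTne
  · rintro u v hu hv hsub ⟨a, haT, hau⟩ ⟨b, hbT, hbv⟩
    by_contra hcon
    rw [not_nonempty_iff_eq_empty] at hcon
    -- T ∩ u and T ∩ v are disjoint compact sets
    have hTc : IsCompact T := hTclosed.isCompact
    have hAe : T ∩ u = T ∩ vᶜ := by
      apply Set.Subset.antisymm
      · rintro x ⟨hx, hxu⟩
        refine ⟨hx, fun hxv => ?_⟩
        have : x ∈ T ∩ (u ∩ v) := ⟨hx, hxu, hxv⟩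
        rw [hcon] at this; exact this
      · rintro x ⟨hx, hxv⟩
        rcases hsub hx with h | h
        · exact ⟨hx, h⟩
        · exact absurd h hxv
    have hBe : T ∩ v = T ∩ uᶜ := by
      apply Set.Subset.antisymm
      · rintro x ⟨hx, hxv⟩
        refine ⟨hx, fun hxu => ?_⟩
        have : x ∈ T ∩ (u ∩ v) := ⟨hx, hxu, hxv⟩
        rw [hcon] at this; exact this
      · rintro x ⟨hx, hxu⟩
        rcases hsub hx with h | h
        · exact absurd h hxu
        · exact ⟨hx, h⟩
    have hAc : IsCompact (T ∩ u) := by rw [hAe]; exact hTc.inter_right hv.isClosed_compl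
    have hBc : IsCompact (T ∩ v) := by rw [hBe]; exact hTc.inter_right hu.isClosed_compl
    have hABd : Disjoint (T ∩ u) (T ∩ v) := by
      rw [Set.disjoint_left]
      rintro x ⟨hxT, hxu⟩ ⟨_, hxv⟩
      have : x ∈ T ∩ (u ∩ v) := ⟨hxT, hxu, hxv⟩
      rw [hcon] at this; exact this
    obtain ⟨u', v', hu', hv', hau', hbv', hd'⟩ :=
      SeparatedNhds.of_isCompact_isCompact hAc hBc hABd
    -- some stage is contained in u' ∪ v'
    have hstage : ∃ n, K n ⊆ u' ∪ v' := by
      by_contra h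
      push_neg at h
      have hne : ∀ n, (K n \ (u' ∪ v')).Nonempty := by
        intro n
        obtain ⟨x, hx, hx'⟩ := Set.not_subset.mp (h n)
        exact ⟨x, hx, hx'⟩
      have hdec : ∀ n, K (n + 1) \ (u' ∪ v') ⊆ K n \ (u' ∪ v') := by
        rintro n x ⟨hx, hx'⟩
        exact ⟨fun i hi => hx i (by omega), hx'⟩
      have hcl : ∀ n, IsClosed (K n \ (u' ∪ v')) := fun n =>
        (hKclosed n).inter (hu'.union hv').isClosed_compl
      obtain ⟨x, hx⟩ := IsCompact.nonempty_iInter_of_sequence_nonempty_isCompact_isClosed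
        (fun n => K n \ (u' ∪ v')) hdec hne ((hcl 0).isCompact) hcl
      simp only [Set.mem_iInter, Set.mem_diff] at hx
      have hxT : x ∈ T := by
        rw [hTK]
        exact Set.mem_iInter.mpr fun n => (hx n).1
      have : x ∈ u' ∪ v' := by
        rcases hsub hxT with h' | h'
        · exact Or.inl (hau' ⟨hxT, h'⟩)
        · exact Or.inr (hbv' ⟨hxT, h'⟩)
      exact (hx 0).2 this
    obtain ⟨n, hn⟩ := hstage
    obtain ⟨x, _, hxu', hxv'⟩ := hKconn n u' v' hu' hv' hn
      ⟨a, hTsub n haT, hau' ⟨haT, hau⟩⟩ ⟨b, hTsub n hbT, hbv' ⟨hbT, hbv⟩⟩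
    exact Set.disjoint_left.mp hd' hxu' hxv'
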